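/- Let μ be the standard Gaussian measure N(0,1) on ℝ, and let q ≥ 1 and k ≥ 0 be integers. Then ( ∫_ℝ |H_k(x)|^{2q} dμ(x) )^{1/(2q)} ≤ (2q − 1)^{k/2} · √(k!). -/

import Mathlib

open MeasureTheory ProbabilityTheory

open Polynomial Finset Filter Real Set
open scoped ENNReal NNReal

/-- The `k`-th probabilists' Hermite polynomial, as a function on `ℝ`. -/
noncomputable def Hm (k : ℕ) (x : ℝ) : ℝ := Polynomial.aeval x (Polynomial.hermite k)

/-- Moments of the standard Gaussian: `gm n = (n-1)!!` for even `n`, `0` for odd. -/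
def gm : ℕ → ℝ
  | 0 => 1
  | 1 => 0
  | (n+2) => (n+1) * gm n

/-- Algebraic "Gaussian expectation" functional on polynomials. -/
noncomputable def EI (p : Polynomial ℝ) : ℝ := p.sum fun n a => a * gm n

lemma EI_add (p q : Polynomial ℝ) : EI (p + q) = EI p + EI q := by
  unfold EI
  exact Polynomial.sum_add_index p q _ (fun n => by simp) (fun n a b => add_mul a b (gm n))

lemma EI_zero : EI 0 = 0 := by simp [EI]

lemma EI_monomial (n : ℕ) (a : ℝ) : EI (monomial n a) = a * gm n := by
  unfold EI
  exact Polynomial.sum_monomial_index a _ (by simp)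

lemma EI_smul (c : ℝ) (p : Polynomial ℝ) : EI (c • p) = c * EI p := by
  unfold EI
  rw [Polynomial.sum_smul_index p c _ (by simp), Polynomial.sum_def, Polynomial.sum_def,
    Finset.mul_sum]
  exact Finset.sum_congr rfl fun n hn => by ring

lemma EI_C_mul (c : ℝ) (p : Polynomial ℝ) : EI (C c * p) = c * EI p := by
  rw [← smul_eq_C_mul, EI_smul]

lemma EI_one : EI 1 = 1 := by
  simpa [gm] using EI_monomial 0 1

lemma gm_succ_succ (n : ℕ) : gm (n + 2) = (n+1) * gm n := rfl

lemma gm_key (n : ℕ) : gm (n + 1) = n * gm (n - 1) := by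
  cases n with
  | zero => simp [gm]
  | succ m => simp [gm_succ_succ]

/-- Gaussian integration by parts, algebraic form: `E[x p(x)] = E[p'(x)]`. -/
lemma EI_X_mul (p : Polynomial ℝ) : EI (X * p) = EI (derivative p) := by
  induction p using Polynomial.induction_on' with
  | add p q hp hq => rw [mul_add, EI_add, hp, hq, derivative_add, EI_add]
  | monomial n a =>
      rw [X_mul_monomial, EI_monomial, derivative_monomial, EI_monomial, gm_key]
      ring


lemma gm_zero : gm 0 = 1 := rfl
lemma gm_one : gm 1 = 0 := rfl

lemma EI_eq_sum_range (p : Polynomial ℝ) :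
    EI p = ∑ i ∈ Finset.range (p.natDegree + 1), p.coeff i * gm i := by
  unfold EI
  exact Polynomial.sum_over_range p (fun n => zero_mul _)


/-- Real-coefficient Hermite polynomial. -/
noncomputable def HH (k : ℕ) : Polynomial ℝ := (hermite k).map (Int.castRingHom ℝ)

lemma HH_zero : HH 0 = 1 := by simp [HH]

lemma HH_succ (k : ℕ) : HH (k+1) = X * HH k - derivative (HH k) := by
  unfold HH
  rw [hermite_succ, Polynomial.map_sub, Polynomial.map_mul, map_X, derivative_map]

lemma derivative_HH_succ (k : ℕ) :
    derivative (HH (k+1)) = C ((k:ℝ)+1) * HH k := by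
  induction k with
  | zero => simp [HH_succ, HH_zero]
  | succ m ih =>
      rw [HH_succ (m+1), derivative_sub, derivative_mul, derivative_X, one_mul, ih,
        derivative_mul, derivative_C, zero_mul, zero_add]
      push_cast
      simp only [C_add, C_1]
      linear_combination (-(C ((m:ℝ)) + 1)) * HH_succ m

lemma derivative_HH (k : ℕ) :
    derivative (HH k) = C (k:ℝ) * HH (k-1) := by
  cases k with
  | zero => simp [HH_zero]
  | succ m => rw [derivative_HH_succ]; push_cast; simp

/-- Hermite integration by parts: `E[H_{k+1} f] = E[H_k f']`. -/
lemma EI_HH_succ_mul (k : ℕ) (f : Polynomial ℝ) :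
    EI (HH (k+1) * f) = EI (HH k * derivative f) := by
  have h1 : HH (k+1) * f = X * (HH k * f) - derivative (HH k) * f := by
    rw [HH_succ]; ring
  have h2 : EI (HH (k+1) * f) + EI (derivative (HH k) * f) = EI (X * (HH k * f)) := by
    rw [← EI_add, h1]; congr 1; ring
  rw [EI_X_mul, derivative_mul, EI_add] at h2
  linarith

lemma derivative_finset_prod {ι : Type*} [DecidableEq ι] (s : Finset ι) (f : ι → Polynomial ℝ) :
    derivative (∏ i ∈ s, f i) = ∑ i ∈ s, (∏ j ∈ s.erase i, f j) * derivative (f i) := by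
  induction s using Finset.induction_on with
  | empty => simp
  | insert a s ha ih =>
      have key : ∀ i ∈ s, (∏ j ∈ (insert a s).erase i, f j) * derivative (f i)
          = f a * ((∏ j ∈ s.erase i, f j) * derivative (f i)) := by
        intro i hi
        rw [Finset.erase_insert_of_ne (by rintro rfl; exact ha hi),
          Finset.prod_insert (fun h => ha (Finset.mem_of_mem_erase h))]
        ring
      rw [Finset.prod_insert ha, derivative_mul, ih, Finset.sum_insert ha,
        Finset.erase_insert ha, Finset.sum_congr rfl key, ← Finset.mul_sum]
      ring

lemma EI_sum {ι : Type*} (s : Finset ι) (g : ι → Polynomial ℝ) :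
    EI (∑ i ∈ s, g i) = ∑ i ∈ s, EI (g i) := by
  induction s using Finset.cons_induction with
  | empty => simpa using EI_zero
  | cons a s ha ih => rw [Finset.sum_cons, EI_add, ih, Finset.sum_cons]

lemma EI_prod_rec {n : ℕ} (κ : Fin n → ℕ) (i : Fin n) (hi : 1 ≤ κ i) :
    EI (∏ j, HH (κ j)) = ∑ j ∈ univ.erase i, (κ j : ℝ) *
      EI (HH (κ i - 1) * (HH (κ j - 1) * ∏ a ∈ (univ.erase i).erase j, HH (κ a))) := by
  obtain ⟨k, hk⟩ : ∃ k, κ i = k + 1 := ⟨κ i - 1, (Nat.succ_pred_eq_of_pos hi).symm⟩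
  have h0 : ∏ j, HH (κ j) = HH (κ i) * ∏ j ∈ univ.erase i, HH (κ j) :=
    (Finset.mul_prod_erase univ _ (mem_univ i)).symm
  rw [h0, hk, EI_HH_succ_mul, derivative_finset_prod, Finset.mul_sum, EI_sum]
  refine Finset.sum_congr rfl fun j hj => ?_
  rw [derivative_HH]
  have : HH k * ((∏ a ∈ (univ.erase i).erase j, HH (κ a)) * (C ((κ j : ℝ)) * HH (κ j - 1)))
      = C ((κ j : ℝ)) * (HH k * (HH (κ j - 1) * ∏ a ∈ (univ.erase i).erase j, HH (κ a))) := by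
    ring
  rw [this, EI_C_mul]
  simp

lemma main_bound {n : ℕ} (hn : 2 ≤ n) : ∀ N : ℕ, ∀ κ : Fin n → ℕ, (∑ j, κ j) = N →
    |EI (∏ j, HH (κ j))| ≤ ((n:ℝ) - 1) ^ ((N:ℝ)/2) * ∏ j, Real.sqrt (κ j).factorial := by
  intro N
  induction N using Nat.strong_induction_on with
  | _ N IH =>
  intro κ hκ
  have hbase : (0:ℝ) < (n:ℝ) - 1 := by
    have : (2:ℝ) ≤ (n:ℝ) := by exact_mod_cast hn
    linarith
  have hprod_nonneg : (0:ℝ) ≤ ∏ j, Real.sqrt (κ j).factorial :=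
    Finset.prod_nonneg fun j _ => Real.sqrt_nonneg _
  by_cases hall : ∀ j, κ j = 0
  · have h1 : ∏ j, HH (κ j) = 1 := by
      rw [Finset.prod_congr rfl fun j _ => by rw [hall j, HH_zero]]
      simp
    have hN : N = 0 := by rw [← hκ]; simp [hall]
    subst hN
    rw [h1, EI_one]
    have h2 : ∏ j, Real.sqrt (κ j).factorial = 1 := by
      rw [Finset.prod_congr rfl fun j _ => by rw [hall j]]
      simp
    rw [h2]
    simp
  · push_neg at hall
    obtain ⟨i₀, hi₀⟩ := hall
    obtain ⟨i, -, hmax⟩ := Finset.exists_max_image Finset.univ κ ⟨i₀, mem_univ i₀⟩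
    have hi : 1 ≤ κ i := le_trans (Nat.one_le_iff_ne_zero.2 hi₀) (hmax i₀ (mem_univ i₀))
    rw [EI_prod_rec κ i hi]
    set T : ℝ := ((n:ℝ) - 1) ^ (((N:ℝ) - 2)/2) * ∏ a, Real.sqrt (κ a).factorial with hT
    have hTnonneg : 0 ≤ T := mul_nonneg (Real.rpow_nonneg hbase.le _) hprod_nonneg
    have hterm : ∀ j ∈ univ.erase i, |(κ j : ℝ) *
        EI (HH (κ i - 1) * (HH (κ j - 1) * ∏ a ∈ (univ.erase i).erase j, HH (κ a)))| ≤ T := by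
      intro j hj
      have hij : j ≠ i := Finset.ne_of_mem_erase hj
      rcases Nat.eq_zero_or_pos (κ j) with h0 | hjpos
      · rw [h0]; simpa using hTnonneg
      · -- the genuine case
        set κ' : Fin n → ℕ :=
          Function.update (Function.update κ i (κ i - 1)) j (κ j - 1) with hκ'
        have hκ'i : κ' i = κ i - 1 := by
          rw [hκ', Function.update_of_ne (Ne.symm hij), Function.update_self]
        have hκ'j : κ' j = κ j - 1 := by rw [hκ', Function.update_self]
        have hκ'a : ∀ a ∈ (univ.erase i).erase j, κ' a = κ a := by
          intro a ha
          have haj : a ≠ j := Finset.ne_of_mem_erase ha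
          have hai : a ≠ i := Finset.ne_of_mem_erase (Finset.mem_of_mem_erase ha)
          rw [hκ', Function.update_of_ne haj, Function.update_of_ne hai]
        have hN2 : 2 ≤ N := by
          have e1 : ∑ a, κ a = κ i + ∑ a ∈ univ.erase i, κ a :=
            (Finset.add_sum_erase univ κ (mem_univ i)).symm
          have e2 : ∑ a ∈ univ.erase i, κ a = κ j + ∑ a ∈ (univ.erase i).erase j, κ a :=
            (Finset.add_sum_erase _ κ hj).symm
          omega
        have hprodeq : HH (κ i - 1) * (HH (κ j - 1) * ∏ a ∈ (univ.erase i).erase j, HH (κ a))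
            = ∏ a, HH (κ' a) := by
          rw [← Finset.mul_prod_erase univ (fun a => HH (κ' a)) (mem_univ i),
            ← Finset.mul_prod_erase _ (fun a => HH (κ' a)) hj, hκ'i, hκ'j]
          congr 1
          congr 1
          exact Finset.prod_congr rfl fun a ha => by rw [hκ'a a ha]
        have hsum' : ∑ a, κ' a = N - 2 := by
          have e1 : ∑ a, κ a = κ i + (κ j + ∑ a ∈ (univ.erase i).erase j, κ a) := by
            rw [Finset.add_sum_erase _ κ hj, Finset.add_sum_erase univ κ (mem_univ i)]
          have e1' : ∑ a, κ' a = κ' i + (κ' j + ∑ a ∈ (univ.erase i).erase j, κ' a) := by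
            rw [Finset.add_sum_erase _ κ' hj, Finset.add_sum_erase univ κ' (mem_univ i)]
          have e2 : ∑ a ∈ (univ.erase i).erase j, κ' a = ∑ a ∈ (univ.erase i).erase j, κ a :=
            Finset.sum_congr rfl fun a ha => hκ'a a ha
          rw [e1', e2, hκ'i, hκ'j]
          omega
        have hIH := IH (N - 2) (by omega) κ' hsum'
        have hcast : (((N - 2 : ℕ)):ℝ) = (N:ℝ) - 2 := by
          push_cast [Nat.cast_sub hN2]
          ring
        rw [hcast] at hIH
        rw [abs_mul, Nat.abs_cast, hprodeq]
        -- now bound (κ j) * |EI ∏ HH κ'| ≤ T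
        have key : (κ j : ℝ) * ∏ a, Real.sqrt (κ' a).factorial
            ≤ ∏ a, Real.sqrt (κ a).factorial := by
          rw [← Finset.mul_prod_erase univ (fun a => Real.sqrt (κ' a).factorial) (mem_univ i),
            ← Finset.mul_prod_erase _ (fun a => Real.sqrt (κ' a).factorial) hj,
            ← Finset.mul_prod_erase univ (fun a => Real.sqrt (κ a).factorial) (mem_univ i),
            ← Finset.mul_prod_erase _ (fun a => Real.sqrt (κ a).factorial) hj, hκ'i, hκ'j]
          have eR : ∏ a ∈ (univ.erase i).erase j, Real.sqrt (κ' a).factorial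
              = ∏ a ∈ (univ.erase i).erase j, Real.sqrt (κ a).factorial :=
            Finset.prod_congr rfl fun a ha => by rw [hκ'a a ha]
          rw [eR]
          set R : ℝ := ∏ a ∈ (univ.erase i).erase j, Real.sqrt (κ a).factorial with hR
          have hRnn : 0 ≤ R := Finset.prod_nonneg fun a _ => Real.sqrt_nonneg _
          have hfi : ((κ i).factorial : ℝ) = (κ i : ℝ) * ((κ i - 1).factorial : ℝ) := by
            rw [← Nat.mul_factorial_pred (by omega)]; push_cast; ring
          have hfj : ((κ j).factorial : ℝ) = (κ j : ℝ) * ((κ j - 1).factorial : ℝ) := by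
            rw [← Nat.mul_factorial_pred (by omega)]; push_cast; ring
          have hsi : Real.sqrt (κ i).factorial
              = Real.sqrt (κ i) * Real.sqrt ((κ i - 1).factorial) := by
            rw [hfi, Real.sqrt_mul (Nat.cast_nonneg _)]
          have hsj : Real.sqrt (κ j).factorial
              = Real.sqrt (κ j) * Real.sqrt ((κ j - 1).factorial) := by
            rw [hfj, Real.sqrt_mul (Nat.cast_nonneg _)]
          rw [hsi, hsj]
          have h1 : Real.sqrt (κ j) ≤ Real.sqrt (κ i) :=
            Real.sqrt_le_sqrt (by exact_mod_cast hmax j (mem_univ j))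
          have h2 : Real.sqrt (κ j) * Real.sqrt (κ j) = (κ j : ℝ) :=
            Real.mul_self_sqrt (Nat.cast_nonneg _)
          have h3 : 0 ≤ Real.sqrt ((κ i - 1).factorial) := Real.sqrt_nonneg _
          have h4 : 0 ≤ Real.sqrt ((κ j - 1).factorial) := Real.sqrt_nonneg _
          have h5 : 0 ≤ Real.sqrt (κ j) := Real.sqrt_nonneg _
          nlinarith [mul_nonneg h3 h4, mul_nonneg (mul_nonneg h3 h4) hRnn,
            mul_nonneg h5 (mul_nonneg h3 (mul_nonneg h4 hRnn))]
        calc (κ j : ℝ) * |EI (∏ a, HH (κ' a))|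
            ≤ (κ j : ℝ) * (((n:ℝ) - 1) ^ (((N:ℝ) - 2)/2) * ∏ a, Real.sqrt (κ' a).factorial) :=
              mul_le_mul_of_nonneg_left hIH (Nat.cast_nonneg _)
          _ = ((n:ℝ) - 1) ^ (((N:ℝ) - 2)/2) * ((κ j : ℝ) * ∏ a, Real.sqrt (κ' a).factorial) := by
              ring
          _ ≤ T := by
              rw [hT]
              exact mul_le_mul_of_nonneg_left key (Real.rpow_nonneg hbase.le _)
    calc |∑ j ∈ univ.erase i, (κ j : ℝ) *
        EI (HH (κ i - 1) * (HH (κ j - 1) * ∏ a ∈ (univ.erase i).erase j, HH (κ a)))|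
        ≤ ∑ j ∈ univ.erase i, |(κ j : ℝ) *
          EI (HH (κ i - 1) * (HH (κ j - 1) * ∏ a ∈ (univ.erase i).erase j, HH (κ a)))| :=
          Finset.abs_sum_le_sum_abs _ _
      _ ≤ ∑ _j ∈ univ.erase i, T := Finset.sum_le_sum hterm
      _ = ((n:ℝ) - 1) * T := by
          rw [Finset.sum_const, Finset.card_erase_of_mem (mem_univ i), Finset.card_univ,
            Fintype.card_fin, nsmul_eq_mul, Nat.cast_sub (by omega)]
          norm_num
      _ ≤ ((n:ℝ) - 1) ^ ((N:ℝ)/2) * ∏ j, Real.sqrt (κ j).factorial := by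
          rw [hT]
          have hexp : ((n:ℝ) - 1) ^ ((N:ℝ)/2)
              = ((n:ℝ) - 1) * ((n:ℝ) - 1) ^ (((N:ℝ) - 2)/2) := by
            have h : (N:ℝ)/2 = 1 + ((N:ℝ) - 2)/2 := by ring
            rw [h, Real.rpow_add hbase, Real.rpow_one]
          rw [hexp]
          exact le_of_eq (by ring)

/-- transfer lemma -/
lemma integral_gaussianReal_eq (g : ℝ → ℝ) :
    ∫ x, g x ∂(gaussianReal 0 1) = ∫ x, gaussianPDFReal 0 1 x * g x := by
  rw [gaussianReal_of_var_ne_zero 0 one_ne_zero]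
  have hmeas : Measurable fun x => (gaussianPDFReal 0 1 x).toNNReal :=
    (measurable_gaussianPDFReal 0 1).real_toNNReal
  have hd : (gaussianPDF 0 1) = fun x => ((gaussianPDFReal 0 1 x).toNNReal : ℝ≥0∞) := by
    funext x
    rfl
  rw [hd, integral_withDensity_eq_integral_smul hmeas g]
  refine integral_congr_ae (Filter.Eventually.of_forall fun x => ?_)
  simp only [NNReal.smul_def, Real.coe_toNNReal _ (gaussianPDFReal_nonneg 0 1 x), smul_eq_mul]

noncomputable def en (n : ℕ) : ℝ := ∫ x, x^n * Real.exp (-x^2/2)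

lemma integrable_xn_exp (n : ℕ) : Integrable (fun x : ℝ => x^n * Real.exp (-x^2/2)) := by
  have h := integrable_rpow_mul_exp_neg_mul_sq (b := (1:ℝ)/2) (by norm_num) (s := (n:ℝ))
    (by have := Nat.cast_nonneg (α := ℝ) n; linarith)
  have he : (fun x : ℝ => x ^ ((n:ℝ)) * Real.exp (-(1/2) * x ^ 2))
      = fun x : ℝ => x^n * Real.exp (-x^2/2) := by
    funext x
    rw [Real.rpow_natCast]
    ring_nf
  rwa [he] at h

lemma tendsto_xn_exp_atTop (n : ℕ) :
    Tendsto (fun x : ℝ => x^n * Real.exp (-x^2/2)) atTop (nhds 0) := by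
  have hexp : Tendsto (fun x : ℝ => Real.exp (-(1/2) * x)) atTop (nhds 0) := by
    have : Tendsto (fun x : ℝ => -(1/2) * x) atTop atBot := by
      exact tendsto_id.const_mul_atTop_of_neg (by norm_num)
    exact Real.tendsto_exp_atBot.comp this
  have h := (rpow_mul_exp_neg_mul_sq_isLittleO_exp_neg (b := (1:ℝ)/2) (by norm_num)
    ((n:ℝ))).tendsto_zero_of_tendsto hexp
  have he : (fun x : ℝ => x ^ ((n:ℝ)) * Real.exp (-(1/2) * x ^ 2))
      = fun x : ℝ => x^n * Real.exp (-x^2/2) := by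
    funext x; rw [Real.rpow_natCast]; ring_nf
  rwa [he] at h

lemma tendsto_xn_exp_atBot (n : ℕ) :
    Tendsto (fun x : ℝ => x^n * Real.exp (-x^2/2)) atBot (nhds 0) := by
  have h1 := (tendsto_xn_exp_atTop n).const_mul ((-1:ℝ)^n)
  rw [mul_zero] at h1
  have h2 := h1.comp tendsto_neg_atBot_atTop
  have he : (fun x : ℝ => ((-1:ℝ))^n * (x^n * Real.exp (-x^2/2))) ∘ (fun x : ℝ => -x)
      = fun x : ℝ => x^n * Real.exp (-x^2/2) := by
    funext x
    simp only [Function.comp_apply]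
    rw [show ((-x):ℝ)^2 = x^2 from by ring, ← mul_assoc, ← mul_pow,
      show ((-1:ℝ)) * -x = x from by ring]
  rwa [he] at h2

lemma integral_eq_zero_of_deriv (F f : ℝ → ℝ) (hd : ∀ x, HasDerivAt F (f x) x)
    (hi : Integrable f) (ht : Tendsto F atTop (nhds 0)) (hb : Tendsto F atBot (nhds 0)) :
    ∫ x, f x = 0 := by
  have h1 : ∫ x in Set.Ioi (0:ℝ), f x = 0 - F 0 :=
    integral_Ioi_of_hasDerivAt_of_tendsto (hd 0).continuousAt.continuousWithinAt
      (fun x _ => hd x) hi.integrableOn ht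
  have h2 : ∫ x in Set.Iic (0:ℝ), f x = F 0 - 0 :=
    integral_Iic_of_hasDerivAt_of_tendsto (hd 0).continuousAt.continuousWithinAt
      (fun x _ => hd x) hi.integrableOn hb
  rw [← intervalIntegral.integral_Iic_add_Ioi (b := (0:ℝ)) hi.integrableOn hi.integrableOn, h1, h2]
  ring

lemma hasDerivAt_exp_neg_sq (x : ℝ) :
    HasDerivAt (fun x : ℝ => Real.exp (-x^2/2)) (-x * Real.exp (-x^2/2)) x := by
  have h1 : HasDerivAt (fun x : ℝ => -x^2/2) (-x) x := by
    have := ((hasDerivAt_pow 2 x).neg).div_const 2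
    simpa using this.congr_deriv (by ring)
  simpa [mul_comm] using h1.exp

lemma en_zero : en 0 = Real.sqrt (2*Real.pi) := by
  unfold en
  have he : (fun x : ℝ => x^0 * Real.exp (-x^2/2))
      = fun x : ℝ => Real.exp (-(1/2) * x^2) := by
    funext x; ring_nf
  rw [he, integral_gaussian]
  rw [show Real.pi / (1/2) = 2 * Real.pi by ring]

lemma en_one : en 1 = 0 := by
  unfold en
  refine integral_eq_zero_of_deriv (fun x => -Real.exp (-x^2/2)) _ (fun x => ?_)
    (integrable_xn_exp 1) ?_ ?_
  · have := (hasDerivAt_exp_neg_sq x).neg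
    exact this.congr_deriv (by beta_reduce; ring)
  · simpa using (tendsto_xn_exp_atTop 0).neg
  · simpa using (tendsto_xn_exp_atBot 0).neg

lemma en_rec (n : ℕ) : en (n + 2) = ((n:ℝ)+1) * en n := by
  have key : ∫ x, (x^(n+2) * Real.exp (-x^2/2) - ((n:ℝ)+1) * (x^n * Real.exp (-x^2/2))) = 0 := by
    refine integral_eq_zero_of_deriv (fun x => -(x^(n+1) * Real.exp (-x^2/2))) _
      (fun x => ?_) ((integrable_xn_exp (n+2)).sub ((integrable_xn_exp n).const_mul _)) ?_ ?_
    · have h1 : HasDerivAt (fun x : ℝ => x^(n+1)) (((n:ℝ)+1) * x^n) x := by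
        simpa using hasDerivAt_pow (n+1) x
      have h2 := (h1.mul (hasDerivAt_exp_neg_sq x)).neg
      refine h2.congr_deriv ?_
      ring
    · simpa using (tendsto_xn_exp_atTop (n+1)).neg
    · simpa using (tendsto_xn_exp_atBot (n+1)).neg
  rw [integral_sub (integrable_xn_exp (n+2)) ((integrable_xn_exp n).const_mul _),
    integral_const_mul] at key
  unfold en
  linarith

lemma en_eq : ∀ n, en n = Real.sqrt (2*Real.pi) * gm n := by
  intro n
  induction n using Nat.strong_induction_on with
  | _ n IH =>
    match n with
    | 0 => rw [en_zero, gm_zero, mul_one]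
    | 1 => rw [en_one, gm_one, mul_zero]
    | (m+2) => rw [en_rec, IH m (by omega), gm_succ_succ]; ring

lemma pdf_eq (x : ℝ) :
    gaussianPDFReal 0 1 x = (Real.sqrt (2*Real.pi))⁻¹ * Real.exp (-x^2/2) := by
  unfold gaussianPDFReal
  norm_num

lemma sqrt_two_pi_ne : Real.sqrt (2*Real.pi) ≠ 0 := by
  refine ne_of_gt (Real.sqrt_pos.2 ?_)
  have := Real.pi_pos
  linarith

lemma integrable_pdf_xn (n : ℕ) :
    Integrable (fun x : ℝ => gaussianPDFReal 0 1 x * x^n) := by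
  have he : (fun x : ℝ => gaussianPDFReal 0 1 x * x^n)
      = fun x : ℝ => (Real.sqrt (2*Real.pi))⁻¹ * (x^n * Real.exp (-x^2/2)) := by
    funext x; rw [pdf_eq]; ring
  rw [he]
  exact (integrable_xn_exp n).const_mul _

lemma Jn (n : ℕ) : ∫ x, gaussianPDFReal 0 1 x * x^n = gm n := by
  have he : (fun x : ℝ => gaussianPDFReal 0 1 x * x^n)
      = fun x : ℝ => (Real.sqrt (2*Real.pi))⁻¹ * (x^n * Real.exp (-x^2/2)) := by
    funext x; rw [pdf_eq]; ring
  rw [he, integral_const_mul, show (∫ x : ℝ, x^n * Real.exp (-x^2/2)) = en n from rfl, en_eq,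
    ← mul_assoc, inv_mul_cancel₀ sqrt_two_pi_ne, one_mul]

lemma integral_poly (p : Polynomial ℝ) :
    ∫ x, Polynomial.eval x p ∂(gaussianReal 0 1) = EI p := by
  rw [integral_gaussianReal_eq]
  have he : (fun x : ℝ => gaussianPDFReal 0 1 x * Polynomial.eval x p)
      = fun x : ℝ => ∑ i ∈ Finset.range (p.natDegree + 1),
          p.coeff i * (gaussianPDFReal 0 1 x * x^i) := by
    funext x
    rw [Polynomial.eval_eq_sum_range, Finset.mul_sum]
    exact Finset.sum_congr rfl fun i _ => by ring
  rw [he, integral_finset_sum _ fun i _ => (integrable_pdf_xn i).const_mul _,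
    EI_eq_sum_range]
  exact Finset.sum_congr rfl fun i _ => by rw [integral_const_mul, Jn]


/-- Hypercontractivity for Hermite polynomials:
`‖H_k‖_{L^{2q}(μ)} ≤ (2q−1)^{k/2} √(k!)` for the standard Gaussian measure `μ`. -/
theorem hermite_hypercontractivity (q k : ℕ) (hq : 1 ≤ q) :
    (∫ x, |Hm k x| ^ (2*q) ∂(gaussianReal 0 1)) ^ ((1:ℝ)/(2*q)) ≤
      ((2*q : ℝ) - 1) ^ ((k:ℝ)/2) * Real.sqrt (k.factorial) := by
  have hq' : (0:ℝ) < 2*(q:ℝ) := by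
    have : (1:ℝ) ≤ (q:ℝ) := by exact_mod_cast hq
    linarith
  have hA0 : (0:ℝ) < (2*q:ℝ) - 1 := by
    have : (1:ℝ) ≤ (q:ℝ) := by exact_mod_cast hq
    linarith
  have hint : (fun x : ℝ => |Hm k x| ^ (2*q))
      = fun x => Polynomial.eval x ((HH k)^(2*q)) := by
    funext x
    have h1 : Hm k x = Polynomial.eval x (HH k) := by
      unfold Hm HH
      rw [Polynomial.aeval_def, algebraMap_int_eq, Polynomial.eval_map]
    rw [Polynomial.eval_pow, ← h1, pow_mul, pow_mul, sq_abs]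
  have hI : ∫ x, |Hm k x| ^ (2*q) ∂(gaussianReal 0 1) = EI ((HH k)^(2*q)) := by
    calc ∫ x, |Hm k x| ^ (2*q) ∂(gaussianReal 0 1)
        = ∫ x, Polynomial.eval x ((HH k)^(2*q)) ∂(gaussianReal 0 1) := by rw [hint]
      _ = EI ((HH k)^(2*q)) := integral_poly _
  have h0 : (0:ℝ) ≤ ∫ x, |Hm k x| ^ (2*q) ∂(gaussianReal 0 1) :=
    integral_nonneg fun x => pow_nonneg (abs_nonneg _) _
  -- apply the combinatorial bound
  have hNsum : ∑ _j : Fin (2*q), k = 2*q*k := by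
    simp [Finset.sum_const, smul_eq_mul, Finset.card_univ]
  have hb := main_bound (n := 2*q) (by omega) (2*q*k) (fun _ => k) hNsum
  rw [Finset.prod_const, Finset.prod_const, Finset.card_univ, Fintype.card_fin] at hb
  have hEB : EI ((HH k)^(2*q))
      ≤ (((2*q:ℕ):ℝ) - 1) ^ (((2*q*k:ℕ):ℝ)/2) * (Real.sqrt (k.factorial))^(2*q) :=
    le_trans (le_abs_self _) hb
  have hIB : ∫ x, |Hm k x| ^ (2*q) ∂(gaussianReal 0 1)
      ≤ (((2*q:ℕ):ℝ) - 1) ^ (((2*q*k:ℕ):ℝ)/2) * (Real.sqrt (k.factorial))^(2*q) := by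
    rw [hI]; exact hEB
  have hmono := Real.rpow_le_rpow h0 hIB (by positivity : (0:ℝ) ≤ (1:ℝ)/(2*q))
  refine le_trans hmono (le_of_eq ?_)
  have hcast1 : (((2*q:ℕ)):ℝ) = 2*(q:ℝ) := by push_cast; ring
  have hcast2 : (((2*q*k:ℕ)):ℝ) = 2*(q:ℝ)*(k:ℝ) := by push_cast; ring
  rw [hcast1, hcast2]
  set A : ℝ := 2*(q:ℝ) - 1 with hAdef
  set C : ℝ := Real.sqrt (k.factorial) with hCdef
  have hCnn : 0 ≤ C := Real.sqrt_nonneg _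
  have hApos : 0 < A := hA0
  rw [Real.mul_rpow (Real.rpow_nonneg hApos.le _) (pow_nonneg hCnn _)]
  congr 1
  · rw [← Real.rpow_mul hApos.le]
    congr 1
    field_simp
  · rw [← Real.rpow_natCast C (2*q), ← Real.rpow_mul hCnn]
    rw [hcast1, mul_one_div_cancel hq'.ne', Real.rpow_one]
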